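/- Let H be a graph and G an isometric subgraph of H such that every peripheral vertex of H belongs to V(G). Let x, y, z ∈ V(G) and let k be a nonnegative integer with d_H(z,x) > k and d_H(z,y) > k. Then the disk D_G(z,k) separates x and y in G if and only if the disk D_H(z,k) separates x and y in H. -/

import Mathlib

open SimpleGraph

/-- The metric interval `I_H(x,y)`: vertices on shortest `(x,y)`-paths. -/
def interval {V : Type*} (H : SimpleGraph V) (x y : V) : Set V :=
  {v | H.dist x v + H.dist v y = H.dist x y}

/-- A vertex `x` of `H` is peripheral if there is a vertex `y` such that for every
vertex `z ≠ x`, the interval `I_H(y,x)` is not a proper subset of `I_H(y,z)`. -/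
def Peripheral {V : Type*} (H : SimpleGraph V) (x : V) : Prop :=
  ∃ y : V, ∀ z : V, z ≠ x → ¬ interval H y x ⊂ interval H y z

/-- The disk of radius `r` centered at `v`. -/
def disk {V : Type*} (G : SimpleGraph V) (v : V) (r : ℕ) : Set V :=
  {u | G.dist u v ≤ r}

/-- A set `M` separates vertices `x, y ∉ M` if every `(x,y)`-path meets `M`. -/
def Separates {V : Type*} (G : SimpleGraph V) (M : Set V) (x y : V) : Prop :=
  x ∉ M ∧ y ∉ M ∧ ∀ p : G.Walk x y, ∃ w ∈ p.support, w ∈ M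

lemma self_mem_interval {V : Type*} (H : SimpleGraph V) (z v : V) : v ∈ interval H z v := by
  simp [interval]

/-- Every vertex lies on an interval from `z` to some peripheral vertex. -/
lemma exists_peripheral_interval {V : Type*} [Fintype V] (H : SimpleGraph V) (z v : V) :
    ∃ w : V, Peripheral H w ∧ v ∈ interval H z w := by
  obtain ⟨w, hw, hmax⟩ := Set.Finite.exists_maximalFor (fun t => interval H z t)
    {t | interval H z v ⊆ interval H z t} (Set.toFinite _) ⟨v, show interval H z v ⊆ interval H z v from subset_rfl⟩
  refine ⟨w, ⟨z, fun z'' _ hss => ?_⟩, hw (self_mem_interval H z v)⟩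
  exact hss.2 (hmax (le_trans hw hss.subset) hss.subset)

/-- The key metric inequality: a vertex on a geodesic between `a` and `b`, where `a`, `b`
"dominate" two adjacent-or-equal vertices `u`, `v` outside the disk, is outside the disk. -/
lemma key_ineq {V : Type*} {H : SimpleGraph V} (hHconn : H.Connected) {z u v a b t : V} {k : ℕ}
    (huv : H.dist u v ≤ 1) (hu : k < H.dist z u) (hv : k < H.dist z v)
    (ha : u ∈ interval H z a) (hb : v ∈ interval H z b)
    (ht : H.dist a t + H.dist t b = H.dist a b) : k < H.dist z t := by
  have t1 : H.dist z a ≤ H.dist z t + H.dist t a := hHconn.dist_triangle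
  have t2 : H.dist z b ≤ H.dist z t + H.dist t b := hHconn.dist_triangle
  have t3 : H.dist a b ≤ H.dist a u + H.dist u b := hHconn.dist_triangle
  have t4 : H.dist u b ≤ H.dist u v + H.dist v b := hHconn.dist_triangle
  have ha' : H.dist z u + H.dist u a = H.dist z a := ha
  have hb' : H.dist z v + H.dist v b = H.dist z b := hb
  have c1 : H.dist t a = H.dist a t := H.dist_comm ..
  have c2 : H.dist u a = H.dist a u := H.dist_comm ..
  omega

/-- In a connected graph, there is a walk between any two vertices all of whose support
vertices lie on a geodesic. -/
lemma exists_geodesic_walk {W : Type*} {G : SimpleGraph W} (h : G.Connected) (a b : W) :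
    ∃ p : G.Walk a b, ∀ t ∈ p.support, G.dist a t + G.dist t b = G.dist a b := by
  classical
  obtain ⟨p, hp⟩ := (h.preconnected a b).exists_walk_length_eq_dist
  refine ⟨p, fun t ht => ?_⟩
  have h1 : G.dist a t ≤ (p.takeUntil t ht).length := SimpleGraph.dist_le _
  have h2 : G.dist t b ≤ (p.dropUntil t ht).length := SimpleGraph.dist_le _
  have h3 : (p.takeUntil t ht).length + (p.dropUntil t ht).length = p.length := by
    rw [← SimpleGraph.Walk.length_append, p.take_spec ht]
  have h4 : G.dist a b ≤ G.dist a t + G.dist t b := h.dist_triangle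
  omega

/-- Lifting a walk of `H` avoiding the disk to a walk of `G` avoiding the disk. -/
lemma lift_walk {V : Type*} [Fintype V] {H : SimpleGraph V} {s : Set V} {G : SimpleGraph s}
    (hGconn : G.Connected) (hHconn : H.Connected)
    (hiso : ∀ a b : s, G.dist a b = H.dist (a : V) (b : V))
    (hperi : ∀ v : V, Peripheral H v → v ∈ s)
    (z : s) (k : ℕ) (y : s) :
    ∀ {c e : V} (p : H.Walk c e), e = (y : V) → (∀ w ∈ p.support, k < H.dist (z : V) w) →
      ∀ a : s, c ∈ interval H (z : V) (a : V) →
      ∃ q : G.Walk a y, ∀ w ∈ q.support, k < H.dist (z : V) (w : V) := by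
  intro c e p
  induction p with
  | nil =>
    rename_i c0
    intro he hp a hac
    subst he
    obtain ⟨q, hq⟩ := exists_geodesic_walk hGconn a y
    refine ⟨q, fun t ht => ?_⟩
    have hgt : H.dist (a : V) (t : V) + H.dist (t : V) (y : V) = H.dist (a : V) (y : V) := by
      have := hq t ht
      rwa [hiso, hiso, hiso] at this
    have hyy : k < H.dist (z : V) (y : V) := hp _ (SimpleGraph.Walk.start_mem_support _)
    exact key_ineq hHconn (by rw [SimpleGraph.dist_self]; omega) hyy hyy hac (self_mem_interval H _ _) hgt
  | @cons c d _ h p ih =>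
    intro he hp a hac
    subst he
    obtain ⟨w, hwper, hdw⟩ := exists_peripheral_interval H (z : V) d
    set b : s := ⟨w, hperi w hwper⟩ with hb
    have hp' : ∀ u ∈ p.support, k < H.dist (z : V) u := fun u hu =>
      hp u (by simp [hu])
    obtain ⟨q', hq'⟩ := ih rfl hp' b hdw
    obtain ⟨r, hr⟩ := exists_geodesic_walk hGconn a b
    refine ⟨r.append q', fun t ht => ?_⟩
    rcases (SimpleGraph.Walk.mem_support_append_iff _ _).mp ht with ht | ht
    · have hgt : H.dist (a : V) (t : V) + H.dist (t : V) (b : V) = H.dist (a : V) (b : V) := by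
        have := hr t ht
        rwa [hiso, hiso, hiso] at this
      have huv : H.dist c d ≤ 1 := le_of_eq (SimpleGraph.dist_eq_one_iff_adj.mpr h)
      have hc : k < H.dist (z : V) c := hp _ (SimpleGraph.Walk.start_mem_support _)
      have hd : k < H.dist (z : V) d := hp d (by simp)
      exact key_ineq hHconn huv hc hd hac hdw hgt
    · exact hq' t ht

/-- For `x, y, z ∈ V(G)`, the disk `D_G(z,k)` separates `x` and `y` in `G` iff the disk
`D_H(z,k)` separates `x` and `y` in `H`. -/
theorem disk_separates_iff
    {V : Type*} [Fintype V] (H : SimpleGraph V) (s : Set V) (G : SimpleGraph s)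
    (hGconn : G.Connected) (hHconn : H.Connected)
    (hsub : ∀ a b : s, G.Adj a b → H.Adj a b)
    (hiso : ∀ a b : s, G.dist a b = H.dist a b)
    (hperi : ∀ v : V, Peripheral H v → v ∈ s)
    (x y z : s) (k : ℕ) (hx : k < H.dist (z : V) x) (hy : k < H.dist (z : V) y) :
    Separates G (disk G z k) x y ↔ Separates H (disk H (z : V) k) x y := by
  have hxG : (x : s) ∉ disk G z k := by
    simp only [disk, Set.mem_setOf_eq, not_le, hiso]
    rw [H.dist_comm]; exact hx
  have hyG : (y : s) ∉ disk G z k := by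
    simp only [disk, Set.mem_setOf_eq, not_le, hiso]
    rw [H.dist_comm]; exact hy
  have hxH : (x : V) ∉ disk H (z : V) k := by
    simp only [disk, Set.mem_setOf_eq, not_le]
    rw [H.dist_comm]; exact hx
  have hyH : (y : V) ∉ disk H (z : V) k := by
    simp only [disk, Set.mem_setOf_eq, not_le]
    rw [H.dist_comm]; exact hy
  constructor
  · rintro ⟨-, -, hsep⟩
    refine ⟨hxH, hyH, fun p => ?_⟩
    by_contra hcon
    push_neg at hcon
    have hp : ∀ w ∈ p.support, k < H.dist (z : V) w := fun w hw => by
      have := hcon w hw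
      simp only [disk, Set.mem_setOf_eq, not_le] at this
      rwa [H.dist_comm] at this
    obtain ⟨q, hq⟩ := lift_walk hGconn hHconn hiso hperi z k y p rfl hp x
      (self_mem_interval H (z : V) (x : V))
    obtain ⟨w, hws, hwd⟩ := hsep q
    have : k < G.dist w z := by
      rw [hiso, H.dist_comm]
      exact hq w hws
    simp only [disk, Set.mem_setOf_eq] at hwd
    omega
  · rintro ⟨-, -, hsep⟩
    refine ⟨hxG, hyG, fun p => ?_⟩
    let f : G →g H := ⟨Subtype.val, fun {a b} hab => hsub a b hab⟩
    obtain ⟨w, hws, hwd⟩ := hsep (p.map f)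
    rw [SimpleGraph.Walk.support_map, List.mem_map] at hws
    obtain ⟨t, hts, rfl⟩ := hws
    refine ⟨t, hts, ?_⟩
    simp only [disk, Set.mem_setOf_eq] at hwd ⊢
    rwa [hiso]
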